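/- arXiv:2511.03554 — 3 statements merged into one kernel-verified Lean document; each statement's English description precedes it below -/
import Mathlib

section
/- Let F be a finite field with q elements, let n₁, n₂ ≥ 1, and set m₀ = min(n₁, n₂) and Δ₀ = |n₁ − n₂|. Then the fraction of n₁ × n₂ matrices over F having full rank m₀ is at least 1 − q^{−Δ₀}/(q − 1); in particular, since q ≥ 2, it is at least 1 − 2·q^{−(Δ₀+1)}. -/
/-!
For `k ≤ n`, the full-rank `k × n` matrices are the `k`-tuples of linearly independent vectors
of `F^n`, so their fraction is `∏_{i<k} (1 - q^{i-n})`. By the Weierstrass inequality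
`∏ (1 - xᵢ) ≥ 1 - ∑ xᵢ` this is at least `1 - (q^k - 1)/((q - 1) q^n) ≥ 1 - q^{k-n}/(q - 1)`.
Transposing handles `k > n`, and `q/(q - 1) ≤ 2` gives the second bound.
-/

open Finset

theorem Finset.one_sub_sum_le_prod_one_sub {ι R : Type*} [CommRing R] [LinearOrder R]
    [IsStrictOrderedRing R] (s : Finset ι) {f : ι → R}
    (h0 : ∀ i ∈ s, 0 ≤ f i) (h1 : ∀ i ∈ s, f i ≤ 1) :
    1 - ∑ i ∈ s, f i ≤ ∏ i ∈ s, (1 - f i) := by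
  classical
  induction s using Finset.induction with
  | empty => simp
  | @insert a t hat ih =>
    rw [sum_insert hat, prod_insert hat]
    have ih := ih (fun i hi => h0 i (mem_insert_of_mem hi))
      (fun i hi => h1 i (mem_insert_of_mem hi))
    have ha0 := h0 a (mem_insert_self a t)
    have ha1 := h1 a (mem_insert_self a t)
    have hsum : 0 ≤ ∑ i ∈ t, f i := sum_nonneg fun i hi => h0 i (mem_insert_of_mem hi)
    calc 1 - (f a + ∑ i ∈ t, f i) ≤ (1 - f a) * (1 - ∑ i ∈ t, f i) := by nlinarith
      _ ≤ (1 - f a) * ∏ i ∈ t, (1 - f i) := mul_le_mul_of_nonneg_left ih (sub_nonneg.2 ha1)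

theorem one_sub_zpow_sub_div_le_prod {q : ℝ} (hq : 1 < q) {k n : ℕ} (hkn : k ≤ n) :
    1 - q ^ ((k : ℤ) - n) / (q - 1) ≤ ∏ i ∈ range k, (1 - q ^ i / q ^ n) := by
  have hq0 : 0 < q := zero_lt_one.trans hq
  have hgeom : ∑ i ∈ range k, q ^ i / q ^ n ≤ q ^ ((k : ℤ) - n) / (q - 1) := by
    rw [← sum_div, geom_sum_eq hq.ne', zpow_sub₀ hq0.ne', zpow_natCast, zpow_natCast,
      div_div, div_div, mul_comm (q - 1)]
    gcongr
    linarith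
  calc 1 - q ^ ((k : ℤ) - n) / (q - 1) ≤ 1 - ∑ i ∈ range k, q ^ i / q ^ n := by linarith
    _ ≤ ∏ i ∈ range k, (1 - q ^ i / q ^ n) :=
      one_sub_sum_le_prod_one_sub _ (fun i _ => by positivity) fun i hi =>
        div_le_one_of_le₀ (pow_le_pow_right₀ hq.le (by simp at hi; omega)) (by positivity)

theorem cast_prod_pow_sub_pow_div {q k n : ℕ} (hq : q ≠ 0) (hkn : k ≤ n) :
    ((∏ i : Fin k, (q ^ n - q ^ (i : ℕ)) : ℕ) : ℝ) / (q : ℝ) ^ (k * n) =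
      ∏ i ∈ range k, (1 - (q : ℝ) ^ i / (q : ℝ) ^ n) := by
  rw [Nat.cast_prod, pow_mul', ← Fin.prod_const k, ← prod_div_distrib,
    ← Fin.prod_univ_eq_prod_range]
  refine prod_congr rfl fun i _ => ?_
  rw [Nat.cast_sub (Nat.pow_le_pow_right (Nat.pos_of_ne_zero hq) (by omega))]
  push_cast
  field_simp

theorem zpow_div_sub_one_le_two_mul_zpow_sub_one {q : ℝ} (hq : 2 ≤ q) (z : ℤ) :
    q ^ z / (q - 1) ≤ 2 * q ^ (z - 1) := by
  have hq0 : 0 < q := by linarith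
  have hratio : q / (q - 1) ≤ 2 := by rw [div_le_iff₀ (by linarith)]; linarith
  calc q ^ z / (q - 1) = q ^ (z - 1) * (q / (q - 1)) := by
        rw [zpow_sub_one₀ hq0.ne']; field_simp
    _ ≤ q ^ (z - 1) * 2 := by gcongr
    _ = 2 * q ^ (z - 1) := mul_comm _ _

theorem Matrix.rank_eq_card_height_iff {m n R : Type*} [Fintype m] [Fintype n] [Field R]
    (A : Matrix m n R) :
    A.rank = Fintype.card m ↔ LinearIndependent R A.row := by
  rw [Matrix.rank_eq_finrank_span_row, linearIndependent_iff_card_eq_finrank_span, Set.finrank]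
  exact eq_comm

section FiniteField

variable {F : Type*} [Field F] [Fintype F]

theorem Matrix.card_rank_eq_card_height {k : ℕ} {n : Type*} [Fintype n] [DecidableEq n]
    (hk : k ≤ Fintype.card n) :
    #{M : Matrix (Fin k) n F | M.rank = k} =
      ∏ i : Fin k, (Fintype.card F ^ Fintype.card n - Fintype.card F ^ (i : ℕ)) := by
  have rows :
      {M : Matrix (Fin k) n F // M.rank = k} ≃ {s : Fin k → n → F // LinearIndependent F s} :=
    Equiv.subtypeEquiv Matrix.of.symm fun M =>
      (by simpa using M.rank_eq_card_height_iff : M.rank = k ↔ LinearIndependent F M.row)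
  rw [← Fintype.card_subtype, ← Nat.card_eq_fintype_card, Nat.card_congr rows,
    card_linearIndependent (by simpa using hk), Module.finrank_fintype_fun_eq_card]

theorem Matrix.card_rank_eq_transpose {m n : Type*} [Fintype m] [Fintype n] [DecidableEq m]
    [DecidableEq n] (r : ℕ) :
    #{M : Matrix m n F | M.rank = r} = #{M : Matrix n m F | M.rank = r} := by
  rw [← Fintype.card_subtype, ← Fintype.card_subtype]
  exact Fintype.card_congr <| Equiv.subtypeEquiv (Matrix.transposeAddEquiv m n F).toEquiv
    fun M => by simp [Matrix.rank_transpose]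

theorem one_sub_zpow_div_le_card_rank_eq_div {k n : ℕ} (hkn : k ≤ n) :
    1 - (Fintype.card F : ℝ) ^ ((k : ℤ) - n) / (Fintype.card F - 1) ≤
      (#{M : Matrix (Fin k) (Fin n) F | M.rank = k} : ℝ) / (Fintype.card F : ℝ) ^ (k * n) := by
  rw [Matrix.card_rank_eq_card_height (by simpa using hkn), Fintype.card_fin,
    cast_prod_pow_sub_pow_div Fintype.card_ne_zero hkn]
  exact one_sub_zpow_sub_div_le_prod (by exact_mod_cast Fintype.one_lt_card) hkn

end FiniteField

theorem full_rank_fraction_lower_bound_general {F : Type*} [Field F] [Fintype F]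
    (q n₁ n₂ : ℕ) (hq : Fintype.card F = q) :
    1 - (q : ℝ) ^ (-(((n₁ : ℤ) - (n₂ : ℤ)).natAbs : ℤ)) / ((q : ℝ) - 1)
        ≤ ((Finset.univ.filter
              (fun M : Matrix (Fin n₁) (Fin n₂) F => M.rank = min n₁ n₂)).card : ℝ)
            / (q : ℝ) ^ (n₁ * n₂) ∧
    1 - 2 * (q : ℝ) ^ (-((((n₁ : ℤ) - (n₂ : ℤ)).natAbs : ℤ) + 1))
        ≤ ((Finset.univ.filter
              (fun M : Matrix (Fin n₁) (Fin n₂) F => M.rank = min n₁ n₂)).card : ℝ)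
            / (q : ℝ) ^ (n₁ * n₂) := by
  subst hq
  have full_rank_bound :
      1 - (Fintype.card F : ℝ) ^ (-(((n₁ : ℤ) - n₂).natAbs : ℤ)) / (Fintype.card F - 1)
        ≤ (#{M : Matrix (Fin n₁) (Fin n₂) F | M.rank = min n₁ n₂} : ℝ)
          / (Fintype.card F : ℝ) ^ (n₁ * n₂) := by
    rcases le_total n₁ n₂ with h | h
    · rw [min_eq_left h, show -(((n₁ : ℤ) - n₂).natAbs : ℤ) = n₁ - n₂ by omega]
      exact one_sub_zpow_div_le_card_rank_eq_div h
    · rw [min_eq_right h, Matrix.card_rank_eq_transpose, mul_comm,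
        show -(((n₁ : ℤ) - n₂).natAbs : ℤ) = n₂ - n₁ by omega]
      exact one_sub_zpow_div_le_card_rank_eq_div h
  refine ⟨full_rank_bound, le_trans ?_ full_rank_bound⟩
  have hq : (2 : ℝ) ≤ Fintype.card F := by exact_mod_cast Fintype.one_lt_card
  rw [neg_add']
  linarith [zpow_div_sub_one_le_two_mul_zpow_sub_one hq (-(((n₁ : ℤ) - n₂).natAbs : ℤ))]

/-- Rank probability asymptotics, part 1: the fraction of `n₁ × n₂` matrices over a finite
field with `q` elements that have full rank `m₀ = min n₁ n₂` is at least
`1 − q^{−Δ₀}/(q − 1)` with `Δ₀ = |n₁ − n₂|`; in particular it is at least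
`1 − 2·q^{−(Δ₀+1)}`. -/
theorem full_rank_fraction_lower_bound {F : Type*} [Field F] [Fintype F] [DecidableEq F]
    (q n₁ n₂ : ℕ) (hq : Fintype.card F = q) (h1 : 1 ≤ n₁) (h2 : 1 ≤ n₂) :
    1 - (q : ℝ) ^ (-(((n₁ : ℤ) - (n₂ : ℤ)).natAbs : ℤ)) / ((q : ℝ) - 1)
        ≤ ((Finset.univ.filter
              (fun M : Matrix (Fin n₁) (Fin n₂) F => M.rank = min n₁ n₂)).card : ℝ)
            / (q : ℝ) ^ (n₁ * n₂) ∧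
    1 - 2 * (q : ℝ) ^ (-((((n₁ : ℤ) - (n₂ : ℤ)).natAbs : ℤ) + 1))
        ≤ ((Finset.univ.filter
              (fun M : Matrix (Fin n₁) (Fin n₂) F => M.rank = min n₁ n₂)).card : ℝ)
            / (q : ℝ) ^ (n₁ * n₂) :=
  full_rank_fraction_lower_bound_general q n₁ n₂ hq
end

section
/- For every integer k ≥ 1 and every integer a, ∑_{j=a+1}^{k} (j − k/2)·C(k, j)·2^{−k} = (k/4)·C(k−1, a)·2^{−(k−1)}, where C(k−1, a) = 0 if a < 0 or a > k−1 (and the sum is over those j with max(a+1, 0) ≤ j ≤ k). Equivalently, for X ~ Binomial(k, 1/2), Cov(X, 1_{X > a}) = (k/4)·P(Binomial(k−1, 1/2) = a). -/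
/-!
By absorption and Pascal's rule, `(2j - k) C(k, j) = k C(k-1, j-1) - k C(k-1, j)`, so the tail
sum over `j > a` telescopes to `k C(k-1, a)`. Since `E[X] = k/2`, the covariance
`E[X 1_{X > a}] - E[X] P(X > a)` is the same tail sum `E[(X - k/2) 1_{X > a}]`.
-/

/-- Binomial coefficient `C(a, b)` for an integer lower index, with the convention that
it is `0` when `b < 0` (and `Nat.choose` already gives `0` when `b > a`). -/
def intChoose (a : ℕ) (b : ℤ) : ℕ := if 0 ≤ b then a.choose b.toNat else 0

open Finset

lemma intChoose_natCast (n m : ℕ) : intChoose n m = n.choose m := by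
  simp [intChoose]

lemma intChoose_of_neg {n : ℕ} {b : ℤ} (hb : b < 0) : intChoose n b = 0 :=
  if_neg hb.not_ge

lemma intChoose_of_lt {n : ℕ} {b : ℤ} (hb : n < b) : intChoose n b = 0 := by
  lift b to ℕ using by omega
  rw [intChoose_natCast, Nat.choose_eq_zero_of_lt (by omega)]

lemma two_mul_sub_mul_choose (k j : ℕ) :
    (2 * j - k : ℤ) * k.choose j = k * intChoose (k - 1) (j - 1) - k * intChoose (k - 1) j := by
  rcases k with _ | n
  · rcases j with _ | j <;> simp
  rcases j with _ | i
  · simp [intChoose]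
  have absorb : ((n : ℤ) + 1) * n.choose i = (n + 1).choose (i + 1) * ((i : ℤ) + 1) := by
    exact_mod_cast Nat.add_one_mul_choose_eq n i
  have pascal : ((n + 1).choose (i + 1) : ℤ) = n.choose i + n.choose (i + 1) := by
    exact_mod_cast Nat.choose_succ_succ n i
  simp only [add_tsub_cancel_right, Nat.cast_add_one]
  rw [← Nat.cast_add_one, intChoose_natCast, intChoose_natCast]
  push_cast
  linear_combination -2 * absorb - ((n : ℤ) + 1) * pascal

lemma sum_Ico_two_mul_sub_mul_choose (k m : ℕ) :
    ∑ j ∈ Ico m (k + 1), (2 * j - k : ℤ) * k.choose j = k * intChoose (k - 1) (m - 1) := by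
  rcases le_or_gt m (k + 1) with hm | hm
  · have top : (k : ℤ) * intChoose (k - 1) k = 0 := by
      rcases k with _ | n
      · simp
      · rw [intChoose_of_lt (by omega), Nat.cast_zero, mul_zero]
    have telescope := sum_Ico_sub (fun j : ℕ ↦ -((k : ℤ) * intChoose (k - 1) (j - 1))) hm
    simp only [Nat.cast_add_one, add_sub_cancel_right, neg_sub_neg] at telescope
    simp_rw [two_mul_sub_mul_choose]
    rw [telescope, top, sub_zero]
  · rw [Ico_eq_empty (by omega), sum_empty, intChoose_of_lt (by omega), Nat.cast_zero, mul_zero]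

lemma sum_range_ite_lt_two_mul_sub_mul_choose (k : ℕ) (a : ℤ) :
    ∑ j ∈ range (k + 1), (if a < j then (2 * j - k : ℤ) * k.choose j else 0) =
      k * intChoose (k - 1) a := by
  have upper : (range (k + 1)).filter (fun j : ℕ ↦ a < j) = Ico (a + 1).toNat (k + 1) := by
    ext j
    simp only [mem_filter, mem_range, mem_Ico]
    omega
  rw [← sum_filter, upper, sum_Ico_two_mul_sub_mul_choose]
  rcases lt_or_ge a (-1) with ha | ha
  · rw [intChoose_of_neg (by omega), intChoose_of_neg (by omega)]
  · rw [Int.toNat_of_nonneg (by omega), add_sub_cancel_right]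

lemma sum_range_mul_choose_mul_two_zpow (k : ℕ) :
    ∑ j ∈ range (k + 1), (j : ℝ) * k.choose j * 2 ^ (-(k : ℤ)) = k / 2 := by
  rw [← sum_mul]
  have mean := congrArg (Nat.cast : ℕ → ℝ) (Nat.sum_range_mul_choose k)
  push_cast at mean
  rw [mean]
  rcases k with _ | n
  · simp
  · rw [zpow_neg, zpow_natCast, add_tsub_cancel_right, pow_succ]
    field_simp

lemma sum_ite_lt_sub_half_mul_choose_mul_two_zpow (k : ℕ) (a : ℤ) :
    (∑ j ∈ range (k + 1),
        if a < (j : ℤ) then ((j : ℝ) - (k : ℝ) / 2) * (k.choose j : ℝ) * 2 ^ (-(k : ℤ))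
        else 0)
      = ((k : ℝ) / 4) * (intChoose (k - 1) a : ℝ) * 2 ^ (-((k : ℤ) - 1)) := by
  have two_zpow : (2 : ℝ) ^ (-((k : ℤ) - 1)) = 2 ^ (-(k : ℤ)) * 2 := by
    rw [neg_sub', sub_neg_eq_add, zpow_add_one₀ two_ne_zero]
  have centered := congrArg (Int.cast : ℤ → ℝ) (sum_range_ite_lt_two_mul_sub_mul_choose k a)
  push_cast at centered
  calc
    _ = 2 ^ (-(k : ℤ)) / 2 *
        ∑ j ∈ range (k + 1), if a < (j : ℤ) then (2 * j - k : ℝ) * k.choose j else 0 := by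
      rw [mul_sum]
      refine sum_congr rfl fun j _ ↦ ?_
      split_ifs <;> ring
    _ = _ := by
      rw [centered, two_zpow]
      ring

theorem binomial_indicator_covariance_general (k : ℕ) (a : ℤ) :
    (∑ j ∈ Finset.range (k + 1),
        if a < (j : ℤ) then ((j : ℝ) - (k : ℝ) / 2) * (k.choose j : ℝ) * 2 ^ (-(k : ℤ))
        else 0)
      = ((k : ℝ) / 4) * (intChoose (k - 1) a : ℝ) * 2 ^ (-((k : ℤ) - 1)) ∧
    ((∑ j ∈ Finset.range (k + 1),
          (if a < (j : ℤ) then (j : ℝ) else 0) * (k.choose j : ℝ) * 2 ^ (-(k : ℤ)))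
        - (∑ j ∈ Finset.range (k + 1), (j : ℝ) * (k.choose j : ℝ) * 2 ^ (-(k : ℤ)))
          * (∑ j ∈ Finset.range (k + 1),
              (if a < (j : ℤ) then (1 : ℝ) else 0) * (k.choose j : ℝ) * 2 ^ (-(k : ℤ))))
      = ((k : ℝ) / 4) * (intChoose (k - 1) a : ℝ) * 2 ^ (-((k : ℤ) - 1)) := by
  refine ⟨sum_ite_lt_sub_half_mul_choose_mul_two_zpow k a, ?_⟩
  rw [sum_range_mul_choose_mul_two_zpow, mul_sum, ← sum_sub_distrib,
    ← sum_ite_lt_sub_half_mul_choose_mul_two_zpow]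
  refine sum_congr rfl fun j _ ↦ ?_
  split_ifs <;> ring

/-- Simplification of the covariance term: for `X ~ Binomial(k, 1/2)` and any integer `a`,
`∑_{j=a+1}^{k} (j − k/2)·C(k, j)·2^{−k} = (k/4)·C(k−1, a)·2^{−(k−1)}`; equivalently
`Cov(X, 1_{X > a}) = (k/4)·P(Binomial(k−1, 1/2) = a)`. -/
theorem binomial_indicator_covariance (k : ℕ) (hk : 1 ≤ k) (a : ℤ) :
    (∑ j ∈ Finset.range (k + 1),
        if a < (j : ℤ) then ((j : ℝ) - (k : ℝ) / 2) * (k.choose j : ℝ) * 2 ^ (-(k : ℤ))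
        else 0)
      = ((k : ℝ) / 4) * (intChoose (k - 1) a : ℝ) * 2 ^ (-((k : ℤ) - 1)) ∧
    ((∑ j ∈ Finset.range (k + 1),
          (if a < (j : ℤ) then (j : ℝ) else 0) * (k.choose j : ℝ) * 2 ^ (-(k : ℤ)))
        - (∑ j ∈ Finset.range (k + 1), (j : ℝ) * (k.choose j : ℝ) * 2 ^ (-(k : ℤ)))
          * (∑ j ∈ Finset.range (k + 1),
              (if a < (j : ℤ) then (1 : ℝ) else 0) * (k.choose j : ℝ) * 2 ^ (-(k : ℤ))))
      = ((k : ℝ) / 4) * (intChoose (k - 1) a : ℝ) * 2 ^ (-((k : ℤ) - 1)) :=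
  binomial_indicator_covariance_general k a
end

section
/- For every integer n ≥ 2, Cov(n, 1) = 2^{−n}·C(n−2, ⌊(n−1)/2⌋). Moreover, there exists a constant C > 0 such that for all n ≥ 3, |Cov(n, 1) − √(1/(8π(n−2)))| ≤ C·n^{−3/2}. -/
/-- The majority fold-covariance
`Cov(n, m) = 2^{−n}·∑_{j=0}^{m−1} C(m−1, j)²·C(n−2m, ⌊(n−m)/2⌋ − j)`. -/
noncomputable def majCov (n m : ℕ) : ℝ :=
  2 ^ (-(n : ℤ)) * ∑ j ∈ Finset.range m,
    ((m - 1).choose j : ℝ) ^ 2 *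
      (intChoose (n - 2 * m) ((((n - m) / 2 : ℕ) : ℤ) - (j : ℤ)) : ℝ)

/-!
For `m = 1` only the term `j = 0` survives, which gives the exact formula. With `m = n - 2`,
`Cov(n, 1) = C(m, ⌈m/2⌉) / 2^(m+2)`, and the median binomial `C(m, ⌈m/2⌉) / 2^m` equals the
normalised central binomial coefficient `b_k = C(2k, k) / 4^k` for `k = ⌈m/2⌉`. Wallis' product
satisfies `W_k = 1 / ((2k+1) b_k²)` and lies between `(2k+1)/(2k+2) · π/2` and `π/2`, so
`1 / (π (k + 1/2)) ≤ b_k² ≤ 1 / (π k)`, i.e. `1 / (8πn) ≤ Cov(n, 1)² ≤ 1 / (8π(n-2))`.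
The two bounds differ by `O(n⁻²)`; dividing by the square root of the larger one gives the
`n^(-3/2)` error, with constant `1`.
-/

open Real Nat

namespace Real.Wallis

lemma centralBinom_div_four_pow_sq_mul_W (k : ℕ) :
    ((centralBinom k : ℝ) / 4 ^ k) ^ 2 * (2 * k + 1) * W k = 1 := by
  have hfac : (centralBinom k : ℝ) * k ! * k ! = (2 * k)! := by
    have := Nat.choose_mul_factorial_mul_factorial (by omega : k ≤ 2 * k)
    rw [show 2 * k - k = k by omega, ← centralBinom_eq_two_mul_choose] at this
    exact_mod_cast this
  have hc : (centralBinom k : ℝ) ≠ 0 := by exact_mod_cast centralBinom_ne_zero k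
  have h4 : (4 : ℝ) ^ k = 2 ^ (2 * k) := by rw [pow_mul]; norm_num
  rw [h4, W_eq_factorial_ratio, ← hfac]
  field_simp
  ring

lemma two_le_pi_mul_centralBinom_div_four_pow_sq (k : ℕ) :
    2 ≤ π * (2 * k + 1) * ((centralBinom k : ℝ) / 4 ^ k) ^ 2 := by
  have h := centralBinom_div_four_pow_sq_mul_W k
  nlinarith [mul_le_mul_of_nonneg_left (W_le k)
    (by positivity : (0 : ℝ) ≤ ((centralBinom k : ℝ) / 4 ^ k) ^ 2 * (2 * k + 1))]

lemma pi_mul_centralBinom_div_four_pow_sq_le_one (k : ℕ) :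
    π * k * ((centralBinom k : ℝ) / 4 ^ k) ^ 2 ≤ 1 := by
  set b := ((centralBinom k : ℝ) / 4 ^ k) ^ 2
  have h : b * (2 * k + 1) * W k = 1 := centralBinom_div_four_pow_sq_mul_W k
  have hW := le_W k
  rw [div_mul_eq_mul_div, div_le_iff₀ (by positivity)] at hW
  have hb : π * b * (2 * k + 1) ^ 2 ≤ 4 * (k + 1) := by
    nlinarith [mul_le_mul_of_nonneg_left hW (by positivity : (0 : ℝ) ≤ b * (2 * k + 1))]
  have hk : (0 : ℝ) ≤ k := k.cast_nonneg
  nlinarith [mul_le_mul_of_nonneg_left hb hk,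
    mul_nonneg (mul_nonneg pi_pos.le hk) (by positivity : 0 ≤ b)]

end Real.Wallis

lemma Nat.centralBinom_succ_eq_two_mul_choose (k : ℕ) :
    centralBinom (k + 1) = 2 * (2 * k + 1).choose (k + 1) := by
  rw [centralBinom_eq_two_mul_choose, show 2 * (k + 1) = 2 * k + 1 + 1 by ring, choose_succ_succ,
    choose_symm_half]
  ring

lemma choose_half_div_two_pow_eq (m : ℕ) :
    (m.choose ((m + 1) / 2) : ℝ) / 2 ^ m =
      centralBinom ((m + 1) / 2) / 4 ^ ((m + 1) / 2) := by
  obtain ⟨k, rfl | rfl⟩ := Nat.even_or_odd' m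
  · rw [show (2 * k + 1) / 2 = k by omega, centralBinom_eq_two_mul_choose, pow_mul]
    norm_num
  · rw [show (2 * k + 1 + 1) / 2 = k + 1 by omega, Nat.centralBinom_succ_eq_two_mul_choose,
      pow_succ, pow_mul, pow_succ]
    push_cast
    ring

lemma two_le_pi_mul_add_two_mul_choose_half_div_two_pow_sq (m : ℕ) :
    2 ≤ π * (m + 2) * ((m.choose ((m + 1) / 2) : ℝ) / 2 ^ m) ^ 2 := by
  have h := Real.Wallis.two_le_pi_mul_centralBinom_div_four_pow_sq ((m + 1) / 2)
  have hm : (2 * ((m + 1) / 2 : ℕ) + 1 : ℝ) ≤ m + 2 := by exact_mod_cast (by omega)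
  rw [choose_half_div_two_pow_eq]
  exact h.trans (by gcongr)

lemma pi_mul_mul_choose_half_div_two_pow_sq_le_two (m : ℕ) :
    π * m * ((m.choose ((m + 1) / 2) : ℝ) / 2 ^ m) ^ 2 ≤ 2 := by
  have h := Real.Wallis.pi_mul_centralBinom_div_four_pow_sq_le_one ((m + 1) / 2)
  have hm : (m : ℝ) ≤ 2 * ((m + 1) / 2 : ℕ) := by exact_mod_cast (by omega)
  rw [choose_half_div_two_pow_eq]
  calc _ ≤ π * (2 * ((m + 1) / 2 : ℕ)) *
        ((centralBinom ((m + 1) / 2) : ℝ) / 4 ^ ((m + 1) / 2)) ^ 2 := by gcongr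
    _ ≤ 2 := by linarith

lemma abs_sub_sqrt_le_of_sq_mem {x a b : ℝ} (hx : 0 ≤ x) (hb : b ≤ x ^ 2) (ha : x ^ 2 ≤ a) :
    |x - √a| ≤ (a - b) / √a := by
  have hxa : x ≤ √a := le_sqrt_of_sq_le ha
  rw [abs_of_nonpos (by linarith)]
  rcases (sqrt_nonneg a).eq_or_lt with h0 | hpos
  · rw [← h0] at hxa ⊢
    simp [le_antisymm hxa hx]
  · rw [le_div_iff₀ hpos]
    nlinarith [sq_sqrt ((sq_nonneg x).trans ha)]

lemma rpow_neg_three_halves_sq {x : ℝ} (hx : 0 ≤ x) :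
    (x ^ (-(3 : ℝ) / 2)) ^ 2 = 1 / x ^ 3 := by
  rw [← rpow_natCast, ← rpow_mul hx, one_div, ← rpow_natCast, ← rpow_neg hx]
  norm_num

lemma sub_div_sqrt_le_rpow {n : ℝ} (hn : 3 ≤ n) :
    (1 / (8 * π * (n - 2)) - 1 / (8 * π * n)) / √(1 / (8 * π * (n - 2))) ≤
      n ^ (-(3 : ℝ) / 2) := by
  have hπ := pi_gt_three
  have hn2 : 0 < n - 2 := by linarith
  have hdiff : 1 / (8 * π * (n - 2)) - 1 / (8 * π * n) = 1 / (4 * π * n * (n - 2)) := by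
    field_simp
    ring
  rw [hdiff, ← pow_le_pow_iff_left₀ (by positivity) (by positivity) two_ne_zero,
    rpow_neg_three_halves_sq (by linarith), div_pow, sq_sqrt (by positivity)]
  calc (1 / (4 * π * n * (n - 2))) ^ 2 / (1 / (8 * π * (n - 2)))
        = 1 / (2 * π * n ^ 2 * (n - 2)) := by
        field_simp
        ring
    _ ≤ 1 / n ^ 3 := by
        have h : n ≤ 2 * π * (n - 2) := by nlinarith
        gcongr
        nlinarith [mul_le_mul_of_nonneg_left h (sq_nonneg n)]

lemma majCov_one (n : ℕ) :
    majCov n 1 = ((n - 2).choose ((n - 1) / 2) : ℝ) * 2 ^ (-(n : ℤ)) := by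
  simp only [majCov, intChoose, Finset.sum_range_one, Nat.sub_self, Nat.choose_self, mul_one,
    Nat.cast_one, one_pow, one_mul, CharP.cast_eq_zero, sub_zero, Nat.cast_nonneg, if_true,
    Int.toNat_natCast, mul_comm]

lemma majCov_one_eq_choose_half_div_two_pow {n : ℕ} (hn : 2 ≤ n) :
    majCov n 1 = ((n - 2).choose ((n - 2 + 1) / 2) : ℝ) / 2 ^ (n - 2) / 4 := by
  obtain ⟨m, rfl⟩ := Nat.exists_eq_add_of_le' hn
  rw [majCov_one, show m + 2 - 2 = m by omega, show m + 2 - 1 = m + 1 by omega, zpow_neg,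
    zpow_natCast, pow_add]
  ring

lemma inv_eight_pi_mul_le_majCov_one_sq {n : ℕ} (hn : 2 ≤ n) :
    1 / (8 * π * n) ≤ majCov n 1 ^ 2 := by
  have h := two_le_pi_mul_add_two_mul_choose_half_div_two_pow_sq (n - 2)
  rw [show ((n - 2 : ℕ) : ℝ) + 2 = n by push_cast [hn]; ring] at h
  rw [majCov_one_eq_choose_half_div_two_pow hn, div_le_iff₀ (by positivity)]
  nlinarith

lemma majCov_one_sq_le {n : ℕ} (hn : 3 ≤ n) :
    majCov n 1 ^ 2 ≤ 1 / (8 * π * ((n : ℝ) - 2)) := by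
  have h := pi_mul_mul_choose_half_div_two_pow_sq_le_two (n - 2)
  have hn' : (3 : ℝ) ≤ n := by exact_mod_cast hn
  rw [show ((n - 2 : ℕ) : ℝ) = n - 2 by push_cast [(by omega : 2 ≤ n)]; ring] at h
  rw [majCov_one_eq_choose_half_div_two_pow (by omega), le_div_iff₀ (by nlinarith [pi_pos])]
  nlinarith

/-- Part (B): the exact expression `Cov(n, 1) = 2^{−n}·C(n−2, ⌊(n−1)/2⌋)` for all `n ≥ 2`,
and the asymptotics `|Cov(n, 1) − √(1/(8π(n−2)))| ≤ C·n^{−3/2}` for all `n ≥ 3`. -/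
theorem majority_cov_leave_one_out :
    (∀ n : ℕ, 2 ≤ n → majCov n 1 = ((n - 2).choose ((n - 1) / 2) : ℝ) * 2 ^ (-(n : ℤ))) ∧
    ∃ C : ℝ, 0 < C ∧ ∀ n : ℕ, 3 ≤ n →
      |majCov n 1 - Real.sqrt (1 / (8 * Real.pi * ((n : ℝ) - 2)))|
        ≤ C * (n : ℝ) ^ (-(3 : ℝ) / 2) := by
  refine ⟨fun n _ => majCov_one n, 1, one_pos, fun n hn => ?_⟩
  have hnonneg : 0 ≤ majCov n 1 := by rw [majCov_one]; positivity
  calc _ ≤ _ := abs_sub_sqrt_le_of_sq_mem hnonneg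
          (inv_eight_pi_mul_le_majCov_one_sq (by omega)) (majCov_one_sq_le hn)
    _ ≤ (n : ℝ) ^ (-(3 : ℝ) / 2) := sub_div_sqrt_le_rpow (by exact_mod_cast hn)
    _ = 1 * (n : ℝ) ^ (-(3 : ℝ) / 2) := (one_mul _).symm
end
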